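/- arXiv:1701.03225 — 7 statements merged into one kernel-verified Lean document; each statement's English description precedes it below -/
import Mathlib

section
/- Let L be a nondegenerate integral lattice, l ∈ L a primitive vector with (l,l) ≠ 0, and σ_l the reflection v ↦ v - (2(v,l)/(l,l))·l on L⊗ℚ. Then σ_l maps L into L if and only if the sublattice ℤl ⊕ (l^⊥ ∩ L) has index 1 or 2 in L. Moreover, in the index-1 case (l,l) = ±div(l), and in the index-2 case (l,l) = ±2·div(l), where div(l) is the positive generator of the ideal (l, L) ⊆ ℤ. -/
/-!
Write `(l, l) = e d` and put `φ = d⁻¹ (l, ·)`, a functional mapping `L` onto `ℤ` with `φ l = e`.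
A vector `x ∈ L` lies in `ℤl ⊕ (l^⊥ ∩ L)` iff `φ x ∈ eℤ`, so this sublattice is the preimage of
`eℤ` under `φ|_L` and has index `|e|`. The reflection coefficient of `v` is `2 φ v / e`, and
since `l` is primitive, `q • l ∈ L` forces `q ∈ ℤ`; as `φ` takes the value `1` on `L`, the
reflection preserves `L` iff `e ∣ 2`, i.e. iff `|e| ∈ {1, 2}`.
-/

open Submodule

section

variable {V : Type*} [AddCommGroup V] [Module ℚ V] {L : Submodule ℤ V} {l : V}

theorem rat_smul_mem_iff_of_primitive (hl : l ∈ L)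
    (hprim : ∀ (c : ℤ) (x : V), x ∈ L → c • x = l → IsUnit c) {q : ℚ} :
    q • l ∈ L ↔ ∃ m : ℤ, q = m := by
  refine ⟨fun hq => ?_, ?_⟩
  · obtain ⟨u, w, huw⟩ := Rat.isCoprime_num_den q
    have hden : (q.den : ℚ) ≠ 0 := by positivity
    -- Bézout for `num, den` puts `den⁻¹ • l` in `L`; primitivity then forces `den = 1`.
    have hinv : (q.den : ℚ)⁻¹ = u * q + w := by
      refine (eq_inv_of_mul_eq_one_left ?_).symm
      rw [add_mul, mul_assoc, Rat.mul_den_eq_num]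
      exact_mod_cast huw
    have hinv_mem : (q.den : ℚ)⁻¹ • l ∈ L := by
      rw [hinv, add_smul, mul_smul, Int.cast_smul_eq_zsmul, Int.cast_smul_eq_zsmul]
      exact L.add_mem (L.smul_mem u hq) (L.smul_mem w hl)
    have hunit := hprim q.den _ hinv_mem <| by
      rw [← Int.cast_smul_eq_zsmul ℚ, smul_smul]
      simp [hden]
    rw [Int.ofNat_isUnit, Nat.isUnit_iff, Rat.den_eq_one_iff] at hunit
    exact ⟨q.num, hunit.symm⟩
  · rintro ⟨m, rfl⟩
    rw [Int.cast_smul_eq_zsmul]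
    exact L.smul_mem m hl

theorem mem_span_singleton_sup_inf_ker_iff (φ : V →ₗ[ℚ] ℚ) (hl : l ∈ L) {x : V} (hx : x ∈ L) :
    x ∈ span ℤ {l} ⊔ (L ⊓ (LinearMap.ker φ).restrictScalars ℤ) ↔ ∃ m : ℤ, φ x = m * φ l := by
  simp only [mem_sup, mem_span_singleton, mem_inf, restrictScalars_mem, LinearMap.mem_ker]
  constructor
  · rintro ⟨_, ⟨m, rfl⟩, z, ⟨-, hz⟩, rfl⟩
    refine ⟨m, ?_⟩
    rw [map_add, hz, ← Int.cast_smul_eq_zsmul ℚ, map_smul, smul_eq_mul, add_zero]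
  · rintro ⟨m, hm⟩
    refine ⟨m • l, ⟨m, rfl⟩, x - m • l, ⟨L.sub_mem hx (L.smul_mem m hl), ?_⟩, add_sub_cancel _ _⟩
    rw [map_sub, ← Int.cast_smul_eq_zsmul ℚ, map_smul, smul_eq_mul, hm, sub_self]

theorem AddMonoidHom.exists_intCast_eq {M : Type*} [AddZeroClass M] (f : M →+ ℚ)
    (hf : ∀ x, ∃ t : ℤ, f x = t) : ∃ g : M →+ ℤ, ∀ x, (g x : ℚ) = f x := by
  have hnum : ∀ x, ((f x).num : ℚ) = f x := fun x => by
    obtain ⟨t, ht⟩ := hf x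
    rw [ht, Rat.num_intCast]
  refine ⟨⟨⟨fun x => (f x).num, by simp⟩, fun x y => Int.cast_injective (α := ℚ) ?_⟩, hnum⟩
  show ((f (x + y)).num : ℚ) = ((f x).num + (f y).num : ℤ)
  rw [Int.cast_add, hnum, hnum, hnum, map_add]

theorem relIndex_span_singleton_sup_inf_ker (φ : V →ₗ[ℚ] ℚ) (hint : ∀ x ∈ L, ∃ t : ℤ, φ x = t)
    (hone : ∃ x ∈ L, φ x = 1) (hl : l ∈ L) {e : ℤ} (he : φ l = e) :
    (span ℤ {l} ⊔ (L ⊓ (LinearMap.ker φ).restrictScalars ℤ)).toAddSubgroup.relIndex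
      L.toAddSubgroup = e.natAbs := by
  obtain ⟨ψ, hψ⟩ :=
    (φ.toAddMonoidHom.comp L.toAddSubgroup.subtype).exists_intCast_eq fun x => hint x x.2
  have hsurj : Function.Surjective ψ := by
    obtain ⟨x, hx, hx1⟩ := hone
    have hψx : ψ ⟨x, hx⟩ = 1 := by exact_mod_cast (hψ ⟨x, hx⟩).trans hx1
    exact fun t => ⟨t • ⟨x, hx⟩, by rw [map_zsmul, hψx, smul_eq_mul, mul_one]⟩
  have hcomap : (span ℤ {l} ⊔ (L ⊓ (LinearMap.ker φ).restrictScalars ℤ)).toAddSubgroup.addSubgroupOf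
      L.toAddSubgroup = (AddSubgroup.zmultiples e).comap ψ := by
    ext x
    rw [AddSubgroup.mem_addSubgroupOf, mem_toAddSubgroup,
      mem_span_singleton_sup_inf_ker_iff φ hl x.2, AddSubgroup.mem_comap, Int.mem_zmultiples_iff]
    have hψx : φ x = ψ x := (hψ x).symm
    rw [hψx, he]
    constructor
    · rintro ⟨m, hm⟩
      exact ⟨m, by rw [mul_comm]; exact_mod_cast hm⟩
    · rintro ⟨m, hm⟩
      exact ⟨m, by rw [hm, mul_comm]; push_cast; rfl⟩
  rw [AddSubgroup.relIndex, hcomap, AddSubgroup.index_comap_of_surjective _ hsurj,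
    Int.index_zmultiples]

theorem forall_smul_mem_iff_dvd (hl : l ∈ L)
    (hprim : ∀ (c : ℤ) (x : V), x ∈ L → c • x = l → IsUnit c) (φ : V →ₗ[ℚ] ℚ)
    (hint : ∀ x ∈ L, ∃ t : ℤ, φ x = t) (hone : ∃ x ∈ L, φ x = 1) {e : ℤ} (he : φ l = e)
    (he0 : e ≠ 0) (n : ℤ) :
    (∀ v ∈ L, (n * φ v / φ l) • l ∈ L) ↔ e ∣ n := by
  have he0' : (e : ℚ) ≠ 0 := by exact_mod_cast he0
  simp_rw [rat_smul_mem_iff_of_primitive hl hprim, he]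
  constructor
  · intro h
    obtain ⟨x, hx, hx1⟩ := hone
    obtain ⟨m, hm⟩ := h x hx
    rw [hx1, mul_one, div_eq_iff he0'] at hm
    exact ⟨m, by rw [mul_comm]; exact_mod_cast hm⟩
  · rintro ⟨c, rfl⟩ v hv
    obtain ⟨t, ht⟩ := hint v hv
    exact ⟨c * t, by rw [ht]; push_cast; field_simp⟩

end

theorem stmt_0_general (V : Type*) [AddCommGroup V] [Module ℚ V]
    (B : V →ₗ[ℚ] V →ₗ[ℚ] ℚ)
    (hsymm : ∀ x y, B x y = B y x)
    (L : Submodule ℤ V)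
    (l : V) (hl : l ∈ L) (hll : B l l ≠ 0)
    (hprim : ∀ (c : ℤ) (x : V), x ∈ L → c • x = l → IsUnit c)
    (d : ℤ) (hd : 0 < d)
    (hdiv1 : ∀ x ∈ L, ∃ t : ℤ, B l x = (t : ℚ) * d)
    (hdiv2 : ∃ x ∈ L, B l x = (d : ℚ))
    (K : Submodule ℤ V)
    (hK : K = L ⊓ (LinearMap.ker (B l)).restrictScalars ℤ)
    (S : Submodule ℤ V) (hS : S = Submodule.span ℤ {l} ⊔ K) :
    ((∀ v ∈ L, v - (2 * B v l / B l l) • l ∈ L) ↔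
      (S.toAddSubgroup.relIndex L.toAddSubgroup = 1 ∨
        S.toAddSubgroup.relIndex L.toAddSubgroup = 2)) ∧
    (S.toAddSubgroup.relIndex L.toAddSubgroup = 1 →
      (B l l = (d : ℚ) ∨ B l l = -(d : ℚ))) ∧
    (S.toAddSubgroup.relIndex L.toAddSubgroup = 2 →
      (B l l = 2 * (d : ℚ) ∨ B l l = -(2 * (d : ℚ)))) := by
  subst hK hS
  have hd0 : (d : ℚ) ≠ 0 := by exact_mod_cast hd.ne'
  set φ := (d : ℚ)⁻¹ • B l with hφ
  have hφint : ∀ x ∈ L, ∃ t : ℤ, φ x = t := fun x hx =>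
    (hdiv1 x hx).imp fun t ht => by rw [hφ, LinearMap.smul_apply, ht, smul_eq_mul]; field_simp
  have hφone : ∃ x ∈ L, φ x = 1 := hdiv2.imp fun x ⟨hx, hxd⟩ => ⟨hx, by simp [hφ, hxd, hd0]⟩
  obtain ⟨e, he⟩ := hdiv1 l hl
  have hφl : φ l = e := by rw [hφ, LinearMap.smul_apply, he, smul_eq_mul]; field_simp
  have he0 : e ≠ 0 := by rintro rfl; simp [he] at hll
  have hindex := relIndex_span_singleton_sup_inf_ker φ hφint hφone hl hφl
  rw [LinearMap.ker_smul _ _ (inv_ne_zero hd0)] at hindex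
  have hrefl : (∀ v ∈ L, v - (2 * B v l / B l l) • l ∈ L) ↔ e ∣ 2 := by
    rw [← forall_smul_mem_iff_dvd hl hprim φ hφint hφone hφl he0 2]
    refine forall₂_congr fun v hv => ?_
    simp only [L.sub_mem_iff_right hv, hsymm v l, hφ, LinearMap.smul_apply, smul_eq_mul,
      Int.cast_ofNat, mul_left_comm (2 : ℚ), mul_div_mul_left _ _ (inv_ne_zero hd0)]
  have hdvd_two : e ∣ 2 ↔ e.natAbs = 1 ∨ e.natAbs = 2 := by
    rw [← Int.natAbs_dvd_natAbs]
    exact Nat.dvd_prime Nat.prime_two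
  rw [hrefl, hindex, he]
  refine ⟨hdvd_two, fun h => ?_, fun h => ?_⟩ <;>
    rcases Int.natAbs_eq_iff.mp h with rfl | rfl <;> simp

/-- Let `L` be a nondegenerate integral lattice (a full, finitely
generated `ℤ`-lattice in a rational quadratic space `(V, B)` with `B` integral on `L`),
`l ∈ L` a primitive vector with `B(l,l) ≠ 0`, `d = div(l)` the positive generator of the
ideal `(l, L) ⊆ ℤ`, `K = l^⊥ ∩ L` and `S = ℤl ⊕ K ⊆ L`.  The reflection
`σ_l(v) = v − (2(v,l)/(l,l))·l` maps `L` into `L` iff `S` has index 1 or 2 in `L`;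
moreover in the index-1 case `(l,l) = ±d` and in the index-2 case `(l,l) = ±2d`. -/
theorem stmt_0 (V : Type*) [AddCommGroup V] [Module ℚ V] [FiniteDimensional ℚ V]
    (B : V →ₗ[ℚ] V →ₗ[ℚ] ℚ)
    (hsymm : ∀ x y, B x y = B y x)
    (hnd : ∀ x : V, x ≠ 0 → ∃ y, B x y ≠ 0)
    (L : Submodule ℤ V) (hfg : L.FG)
    (hspan : Submodule.span ℚ (L : Set V) = ⊤)
    (hint : ∀ x ∈ L, ∀ y ∈ L, ∃ t : ℤ, B x y = (t : ℚ))
    (l : V) (hl : l ∈ L) (hll : B l l ≠ 0)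
    (hprim : ∀ (c : ℤ) (x : V), x ∈ L → c • x = l → IsUnit c)
    (d : ℤ) (hd : 0 < d)
    (hdiv1 : ∀ x ∈ L, ∃ t : ℤ, B l x = (t : ℚ) * d)
    (hdiv2 : ∃ x ∈ L, B l x = (d : ℚ))
    (K : Submodule ℤ V)
    (hK : K = L ⊓ (LinearMap.ker (B l)).restrictScalars ℤ)
    (S : Submodule ℤ V) (hS : S = Submodule.span ℤ {l} ⊔ K) :
    ((∀ v ∈ L, v - (2 * B v l / B l l) • l ∈ L) ↔
      (S.toAddSubgroup.relIndex L.toAddSubgroup = 1 ∨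
        S.toAddSubgroup.relIndex L.toAddSubgroup = 2)) ∧
    (S.toAddSubgroup.relIndex L.toAddSubgroup = 1 →
      (B l l = (d : ℚ) ∨ B l l = -(d : ℚ))) ∧
    (S.toAddSubgroup.relIndex L.toAddSubgroup = 2 →
      (B l l = 2 * (d : ℚ) ∨ B l l = -(2 * (d : ℚ)))) :=
  stmt_0_general V B hsymm L l hl hll hprim d hd hdiv1 hdiv2 K hK S hS
end

section
/- Let L be a nondegenerate integral lattice and l ∈ L a primitive vector with (l,l) ≠ 0. Then the quotient group L/(ℤl ⊕ (l^⊥ ∩ L)) is cyclic of order |(l,l)|/div(l). -/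
/-!
Dividing `x ↦ (l, x)` by `div(l)` gives a surjection `φ : L → ℤ` with `φ l = (l, l) / div(l)`.
A vector `x` lies in `ℤl ⊕ (l^⊥ ∩ L)` exactly when `x - c l ∈ ker φ` for some `c`, i.e. when
`φ l ∣ φ x`, so `φ` reduced modulo `φ l` identifies `L / (ℤl ⊕ (l^⊥ ∩ L))` with `ℤ / φ l`.
-/

open Submodule

theorem Int.eq_of_cast_mul_eq_cast_mul {d : ℚ} (hd : d ≠ 0) {s t : ℤ}
    (h : (s : ℚ) * d = t * d) : s = t := by
  exact_mod_cast mul_right_cancel₀ hd h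

section IntLinear

variable {M : Type*} [AddCommGroup M]

theorem exists_linearMap_int_mul_eq_of_forall_exists (ψ : M →ₗ[ℤ] ℚ) {d : ℚ} (hd : d ≠ 0)
    (h : ∀ x, ∃ t : ℤ, ψ x = t * d) : ∃ φ : M →ₗ[ℤ] ℤ, ∀ x, ψ x = φ x * d := by
  choose f hf using h
  have hf_eq : ∀ x (t : ℤ), ψ x = t * d → f x = t := fun x t ht =>
    Int.eq_of_cast_mul_eq_cast_mul hd ((hf x).symm.trans ht)
  let φ : M →+ ℤ :=
    { toFun := f
      map_zero' := hf_eq 0 0 (by simp)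
      map_add' := fun x y => hf_eq _ _ (by push_cast; rw [map_add, hf x, hf y, add_mul]) }
  exact ⟨φ.toIntLinearMap, hf⟩

theorem map_subtype_ker_eq_inf_ker (L : Submodule ℤ M) (ψ : M →ₗ[ℤ] ℚ) (φ : L →ₗ[ℤ] ℤ)
    {d : ℚ} (hd : d ≠ 0) (hφ : ∀ x : L, ψ x = φ x * d) :
    (LinearMap.ker φ).map L.subtype = L ⊓ LinearMap.ker ψ := by
  ext y
  simp only [mem_map, LinearMap.mem_ker, mem_inf, L.subtype_apply]
  constructor
  · rintro ⟨x, hx, rfl⟩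
    exact ⟨x.2, by rw [hφ, hx, Int.cast_zero, zero_mul]⟩
  · rintro ⟨hy, hψy⟩
    refine ⟨⟨y, hy⟩, Int.eq_of_cast_mul_eq_cast_mul hd ?_, rfl⟩
    rw [← hφ, Int.cast_zero, zero_mul, hψy]

theorem mem_span_singleton_sup_ker_iff_dvd (φ : M →ₗ[ℤ] ℤ) (l x : M) :
    x ∈ span ℤ {l} ⊔ LinearMap.ker φ ↔ φ l ∣ φ x := by
  constructor
  · intro hx
    obtain ⟨y, hy, k, hk, rfl⟩ := mem_sup.mp hx
    obtain ⟨a, rfl⟩ := mem_span_singleton.mp hy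
    rw [LinearMap.mem_ker] at hk
    exact ⟨a, by simp [hk, mul_comm]⟩
  · rintro ⟨c, hc⟩
    refine mem_sup.mpr ⟨c • l, mem_span_singleton.mpr ⟨c, rfl⟩, x - c • l, ?_, by abel⟩
    simp [hc, mul_comm]

/-- Reduction of `φ` modulo `φ l`. -/
noncomputable def quotSpanSingletonSupKerEquivZMod (φ : M →ₗ[ℤ] ℤ)
    (hφ : Function.Surjective φ) (l : M) :
    (M ⧸ span ℤ {l} ⊔ LinearMap.ker φ) ≃ₗ[ℤ] ZMod (φ l).natAbs :=
  let q := (Int.castAddHom (ZMod (φ l).natAbs)).toIntLinearMap ∘ₗ φ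
  have hker : span ℤ {l} ⊔ LinearMap.ker φ = LinearMap.ker q := by
    ext x
    rw [mem_span_singleton_sup_ker_iff_dvd, LinearMap.mem_ker]
    simp [q, ZMod.intCast_zmod_eq_zero_iff_dvd]
  (quotEquivOfEq _ _ hker).trans
    (q.quotKerEquivOfSurjective ((ZMod.intCast_surjective).comp hφ))

end IntLinear

theorem stmt_1_general (V : Type*) [AddCommGroup V] [Module ℚ V]
    (B : V →ₗ[ℚ] V →ₗ[ℚ] ℚ)
    (L : Submodule ℤ V)
    (l : V) (hl : l ∈ L)
    (N : ℤ) (hN : B l l = (N : ℚ))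
    (d : ℤ) (hd : 0 < d)
    (hdiv1 : ∀ x ∈ L, ∃ t : ℤ, B l x = (t : ℚ) * d)
    (hdiv2 : ∃ x ∈ L, B l x = (d : ℚ))
    (K : Submodule ℤ V)
    (hK : K = L ⊓ (LinearMap.ker (B l)).restrictScalars ℤ)
    (S : Submodule ℤ V) (hS : S = Submodule.span ℤ {l} ⊔ K) :
    IsAddCyclic (↥L ⧸ Submodule.comap L.subtype S) ∧
    Nat.card (↥L ⧸ Submodule.comap L.subtype S) = N.natAbs / d.natAbs := by
  have hd0 : (d : ℚ) ≠ 0 := by exact_mod_cast hd.ne'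
  obtain ⟨φ, hφ⟩ := exists_linearMap_int_mul_eq_of_forall_exists
    ((B l).restrictScalars ℤ ∘ₗ L.subtype) hd0 (fun x => hdiv1 x x.2)
  obtain ⟨x₀, hx₀, hBx₀⟩ := hdiv2
  have hφx₀ : φ ⟨x₀, hx₀⟩ = 1 := Int.eq_of_cast_mul_eq_cast_mul hd0 <|
    (hφ _).symm.trans (hBx₀.trans (by rw [Int.cast_one, one_mul]))
  have hφ_surj : Function.Surjective φ := fun n =>
    ⟨n • ⟨x₀, hx₀⟩, by rw [map_zsmul, hφx₀, smul_eq_mul, mul_one]⟩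
  have hN_eq : N = φ ⟨l, hl⟩ * d := by exact_mod_cast hN.symm.trans (hφ ⟨l, hl⟩)
  have hS_eq : S.comap L.subtype = span ℤ {⟨l, hl⟩} ⊔ LinearMap.ker φ := by
    rw [hS, hK, ← LinearMap.ker_restrictScalars, ← map_subtype_ker_eq_inf_ker L _ φ hd0 hφ,
      ← comap_map_eq_of_injective L.injective_subtype (span ℤ {⟨l, hl⟩} ⊔ _),
      Submodule.map_sup, map_span, Set.image_singleton, L.subtype_apply]
  let e := (quotEquivOfEq _ _ hS_eq).trans (quotSpanSingletonSupKerEquivZMod φ hφ_surj ⟨l, hl⟩)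
  refine ⟨isAddCyclic_of_surjective e.symm.toAddMonoidHom e.symm.surjective, ?_⟩
  rw [Nat.card_congr e.toEquiv, Nat.card_zmod, hN_eq, Int.natAbs_mul,
    Nat.mul_div_cancel _ (Int.natAbs_pos.mpr hd.ne')]

/-- Let `L` be a nondegenerate integral lattice (a full, finitely
generated `ℤ`-lattice in a rational quadratic space `(V, B)` with `B` integral on `L`)
and `l ∈ L` a primitive vector with `B(l,l) = N ≠ 0`.  With `d = div(l)` the positive
generator of the ideal `(l, L) ⊆ ℤ`, `K = l^⊥ ∩ L` and `S = ℤl ⊕ K`, the quotient group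
`L/S` is cyclic of order `|N|/d`. -/
theorem stmt_1 (V : Type*) [AddCommGroup V] [Module ℚ V] [FiniteDimensional ℚ V]
    (B : V →ₗ[ℚ] V →ₗ[ℚ] ℚ)
    (hsymm : ∀ x y, B x y = B y x)
    (hnd : ∀ x : V, x ≠ 0 → ∃ y, B x y ≠ 0)
    (L : Submodule ℤ V) (hfg : L.FG)
    (hspan : Submodule.span ℚ (L : Set V) = ⊤)
    (hint : ∀ x ∈ L, ∀ y ∈ L, ∃ t : ℤ, B x y = (t : ℚ))
    (l : V) (hl : l ∈ L)
    (N : ℤ) (hN : B l l = (N : ℚ)) (hN0 : N ≠ 0)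
    (hprim : ∀ (c : ℤ) (x : V), x ∈ L → c • x = l → IsUnit c)
    (d : ℤ) (hd : 0 < d)
    (hdiv1 : ∀ x ∈ L, ∃ t : ℤ, B l x = (t : ℚ) * d)
    (hdiv2 : ∃ x ∈ L, B l x = (d : ℚ))
    (K : Submodule ℤ V)
    (hK : K = L ⊓ (LinearMap.ker (B l)).restrictScalars ℤ)
    (S : Submodule ℤ V) (hS : S = Submodule.span ℤ {l} ⊔ K) :
    IsAddCyclic (↥L ⧸ Submodule.comap L.subtype S) ∧
    Nat.card (↥L ⧸ Submodule.comap L.subtype S) = N.natAbs / d.natAbs :=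
  stmt_1_general V B L l hl N hN d hd hdiv1 hdiv2 K hK S hS
end

section
/- Let G = ℤ/m act linearly on a finite-dimensional complex vector space V, and suppose g ∈ G acts as a quasi-reflection on V (all eigenvalues are 1 except one, which is a root of unity ≠ 1), where V decomposes as U ⊕ ⊕_i W_{d_i,μ_i} with U defined over ℚ as a G-representation. If the reflective eigenvector δ of g lies in U, then g acts as a reflection (the exceptional eigenvalue is −1), the order of g is 2, m/ord(g) is odd, and the line ℂδ is G-stable with G acting through the unique character of order 2. -/
/-!
Let `θᵢ = βᵢ mod ℤ` be the exponents of the generator `g₀`. Since `U` is defined over `ℚ`, its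
exponents are stable under `θ ↦ -θ` (complex conjugation), so `-θⱼ` is the exponent of a line of
`U` as well. On that line `g = g₀^{m''}` acts nontrivially, so it must be the line of `δ` itself:
`θⱼ = -θⱼ`. As `g` moves `δ`, this forces `θⱼ = 1/2` and `m''` odd. Then `g² = g₀^{2m''}` is
trivial, so faithfulness gives `m ∣ 2m''`, while `m ∤ m''`; hence `m = 2 gcd(m, m'')` with
`gcd(m, m'') ∣ m''` odd.
-/

/-- `x ∈ ℚ` is an integer (i.e. `x = 0` in `ℚ/ℤ`). -/
def IsIntQ (x : ℚ) : Prop := ∃ t : ℤ, x = (t : ℚ)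

/-- The multiset of eigenvalue exponents (in `ℚ/ℤ`) of the generator of `ℤ/m` on the
rational irreducible summand `V_d = ⊕_{k ∈ (ℤ/d)ˣ} χ_{k/d}`. -/
def VdExp (d : ℕ) : Multiset (AddCircle (1 : ℚ)) :=
  (((Finset.univ : Finset (Fin d)).filter (fun k : Fin d => Nat.Coprime (k : ℕ) d)).val).map
    (fun k => ((((k : ℕ) : ℚ) / d : ℚ) : AddCircle (1 : ℚ)))

/-- The multiset of eigenvalue exponents (in `ℚ/ℤ`) of the generator of `ℤ/m` on
`W_{d,μ} = ⊕_{k ∈ ℤ/d} χ_{k/d + μ}`. -/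
def WdExp (d : ℕ) (μ : ℚ) : Multiset (AddCircle (1 : ℚ)) :=
  ((Finset.univ : Finset (Fin d)).val).map
    (fun k => ((((k : ℕ) : ℚ) / d + μ : ℚ) : AddCircle (1 : ℚ)))

lemma isIntQ_iff_coe_eq_zero (x : ℚ) : IsIntQ x ↔ (x : AddCircle (1 : ℚ)) = 0 := by
  rw [AddCircle.coe_eq_zero_iff]
  simp [IsIntQ, eq_comm]

lemma isIntQ_natCast_mul_iff (k : ℕ) (x : ℚ) :
    IsIntQ (k * x) ↔ k • (x : AddCircle (1 : ℚ)) = 0 := by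
  rw [isIntQ_iff_coe_eq_zero, ← nsmul_eq_mul, AddCircle.coe_nsmul]

lemma coe_eq_coe_iff_exists_int (x y : ℚ) :
    (x : AddCircle (1 : ℚ)) = y ↔ ∃ t : ℤ, x = t + y := by
  simp only [← sub_eq_zero (a := (x : AddCircle (1 : ℚ))), ← AddCircle.coe_sub,
    ← isIntQ_iff_coe_eq_zero, IsIntQ, sub_eq_iff_eq_add]

lemma mem_VdExp_iff {d : ℕ} {x : AddCircle (1 : ℚ)} :
    x ∈ VdExp d ↔ ∃ k : Fin d, (k : ℕ).Coprime d ∧ (((k : ℚ) / d : ℚ) : AddCircle (1 : ℚ)) = x := by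
  simp [VdExp]

lemma neg_mem_VdExp {d : ℕ} {x : AddCircle (1 : ℚ)} (hx : x ∈ VdExp d) : -x ∈ VdExp d := by
  obtain ⟨k, hcop, rfl⟩ := mem_VdExp_iff.1 hx
  rcases Nat.eq_zero_or_pos (k : ℕ) with hk0 | hkpos
  · simpa [hk0] using hx
  · refine mem_VdExp_iff.2 ⟨⟨d - k, by omega⟩, (Nat.coprime_self_sub_left k.isLt.le).2 hcop, ?_⟩
    rw [← AddCircle.coe_neg, coe_eq_coe_iff_exists_int]
    refine ⟨1, ?_⟩
    have hd : (d : ℚ) ≠ 0 := by have := k.pos; positivity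
    rw [Nat.cast_sub k.isLt.le]
    field_simp
    ring

lemma eq_half_of_two_nsmul_eq_zero {θ : AddCircle (1 : ℚ)} (h2 : 2 • θ = 0) (h0 : θ ≠ 0) :
    θ = ((1 / 2 : ℚ) : AddCircle (1 : ℚ)) := by
  obtain ⟨k, hk, hcop, rfl⟩ :=
    (AddCircle.addOrderOf_eq_pos_iff two_pos).1 (addOrderOf_eq_prime h2 h0)
  interval_cases k
  · simp at hcop
  · norm_num

lemma odd_and_nsmul_eq_self {A : Type*} [AddMonoid A] {x : A} {k : ℕ} (h2 : 2 • x = 0)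
    (hk : k • x ≠ 0) : Odd k ∧ k • x = x := by
  rcases Nat.even_or_odd' k with ⟨u, rfl | rfl⟩
  · exact absurd (by rw [mul_nsmul, h2, nsmul_zero]) hk
  · exact ⟨odd_two_mul_add_one u, by rw [succ_nsmul, mul_nsmul, h2, nsmul_zero, zero_add]⟩

lemma dvd_of_forall_nsmul_eq_zero {ι A : Type*} [AddMonoid A] {θ : ι → A} {m k : ℕ} (hm : 0 < m)
    (hθm : ∀ i, m • θ i = 0) (hfaithful : ∀ r, 0 < r → r < m → ∃ i, r • θ i ≠ 0)
    (hk : ∀ i, k • θ i = 0) : m ∣ k := by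
  by_contra hmk
  obtain ⟨i, hi⟩ := hfaithful (k % m) (Nat.pos_of_ne_zero (mt Nat.dvd_of_mod_eq_zero hmk))
    (Nat.mod_lt _ hm)
  have hki := hk i
  rw [← Nat.mod_add_div k m, add_nsmul, mul_nsmul, hθm, nsmul_zero, add_zero] at hki
  exact hi hki

lemma div_gcd_eq_two_and_odd_div_two {m k : ℕ} (h : m ∣ 2 * k) (hk : Odd k) (hmk : ¬ m ∣ k) :
    m / m.gcd k = 2 ∧ Odd (m / 2) := by
  have hm : Even m := by
    by_contra hm
    have hm2 : m.Coprime 2 :=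
      Nat.coprime_comm.1 (Nat.coprime_two_left.2 (Nat.not_even_iff_odd.1 hm))
    exact hmk (hm2.dvd_of_dvd_mul_left h)
  obtain ⟨a, rfl⟩ := hm
  rw [← two_mul] at h ⊢
  have ha : a ∣ k := Nat.dvd_of_mul_dvd_mul_left two_pos h
  have ha0 : 0 < a := Nat.pos_of_ne_zero (by rintro rfl; simp at h; simp [h] at hk)
  rw [(Nat.coprime_two_left.2 hk).gcd_mul_left_cancel, Nat.gcd_eq_left ha,
    Nat.mul_div_cancel _ ha0, Nat.mul_div_cancel_left _ two_pos]
  exact ⟨rfl, hk.of_dvd_nat ha⟩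

lemma two_nsmul_eq_zero_of_neg_mem_range {ι A : Type*} [AddCommGroup A] {θ : ι → A} {j : ι}
    {k : ℕ} (hneg : -θ j ∈ Set.range θ) (hk : ∀ i, i ≠ j → k • θ i = 0) (hkj : k • θ j ≠ 0) :
    2 • θ j = 0 := by
  obtain ⟨i, hi⟩ := hneg
  rcases eq_or_ne i j with rfl | hij
  · rw [two_nsmul, ← neg_add_cancel (θ i), ← hi]
  · exact absurd (by rw [← neg_eq_zero, ← smul_neg, ← hi, hk i hij]) hkj

/-- A generator `g₀` of `G = ℤ/m` acts faithfully by `diag(e(β₁), …, e(βₙ))`; the indices in `S`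
carry `U`, whose exponent multiset is a union of blocks `VdExp d` (`U` is defined over `ℚ`), and
`g = g₀^{m''}` is a quasi-reflection with reflective eigenvector `δ = e_j`. -/
theorem stmt_6_general (m m'' n : ℕ) (hm : 1 < m)
    (β : Fin n → ℚ)
    (hβm : ∀ i, IsIntQ ((m : ℚ) * β i))
    (hord : ∀ k : ℕ, 0 < k → k < m → ∃ i, ¬ IsIntQ ((k : ℚ) * β i))
    (ds : Multiset ℕ)
    (S : Finset (Fin n))
    (hU : S.val.map (fun i => ((β i : ℚ) : AddCircle (1 : ℚ))) = ds.bind VdExp)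
    (j : Fin n) (hδU : j ∈ S)
    (hqr1 : ∀ i, i ≠ j → IsIntQ ((m'' : ℚ) * β i))
    (hqr2 : ¬ IsIntQ ((m'' : ℚ) * β j)) :
    (∃ t : ℤ, (m'' : ℚ) * β j = (t : ℚ) + 1 / 2) ∧
    m / Nat.gcd m m'' = 2 ∧
    Odd (m / 2) ∧
    (∃ t : ℤ, β j = (t : ℚ) + 1 / 2) := by
  set θ : Fin n → AddCircle (1 : ℚ) := fun i => (β i : AddCircle (1 : ℚ))
  simp only [isIntQ_natCast_mul_iff] at hβm hord hqr1 hqr2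
  have hneg : -θ j ∈ S.val.map θ := by
    obtain ⟨d, hd, hjd⟩ := Multiset.mem_bind.1 (hU ▸ Multiset.mem_map_of_mem θ hδU)
    exact hU ▸ Multiset.mem_bind.2 ⟨d, hd, neg_mem_VdExp hjd⟩
  have h2 : 2 • θ j = 0 := two_nsmul_eq_zero_of_neg_mem_range
    (by obtain ⟨i, -, hi⟩ := Multiset.mem_map.1 hneg; exact ⟨i, hi⟩) hqr1 hqr2
  have hhalf : θ j = ((1 / 2 : ℚ) : AddCircle (1 : ℚ)) :=
    eq_half_of_two_nsmul_eq_zero h2 fun h => hqr2 (by simp [θ, h])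
  obtain ⟨hodd, hm''θ⟩ := odd_and_nsmul_eq_self h2 hqr2
  have hdvd : m ∣ 2 * m'' := dvd_of_forall_nsmul_eq_zero (by omega) hβm hord fun i => by
    rcases eq_or_ne i j with rfl | hij
    · rw [mul_nsmul, h2, nsmul_zero]
    · rw [mul_nsmul', hqr1 i hij, nsmul_zero]
  have hndvd : ¬ m ∣ m'' := fun ⟨c, hc⟩ => hqr2 (by rw [hc, mul_nsmul, hβm, nsmul_zero])
  obtain ⟨hgcd, hodd_half⟩ := div_gcd_eq_two_and_odd_div_two hdvd hodd hndvd
  refine ⟨?_, hgcd, hodd_half, (coe_eq_coe_iff_exists_int _ _).1 hhalf⟩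
  rw [← coe_eq_coe_iff_exists_int, ← nsmul_eq_mul, AddCircle.coe_nsmul]
  exact hm''θ.trans hhalf

/-- `G = ℤ/m` acts on `V = V_θ = U ⊕ ⊕ᵢ W_{dᵢ,μᵢ}` for an admissible
data `θ`.  Since such a representation is diagonalizable, it is encoded by the exponents
`β : Fin n → ℚ` (a generator `g₀` of `G` acts by `diag(e(β₁),…,e(β_n))`, faithfully), a
subset `S` of indices carrying `U` (whose exponent multiset is a union of the Galois-stable
blocks `VdExp d`, `d ∈ ds` — this is "`U` is defined over `ℚ`") while the complementary
indices carry the blocks `WdExp dᵢ μᵢ`.  Suppose `g = g₀^{m''}` acts as a quasi-reflection,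
with reflective eigenvector `δ = e_j` lying in `U` (`j ∈ S`).  Then `g` acts as a
reflection (its exceptional eigenvalue `e(m''β_j)` is `−1`), `ord(g) = m/gcd(m,m'') = 2`,
`m/ord(g) = m/2` is odd, and `ℂδ` is `G`-stable with `G` acting through the unique
character of order 2 (i.e. `β_j ≡ 1/2 mod ℤ`, `ℂδ ≅ V₂`). -/
theorem stmt_6 (m m'' n : ℕ) (hm : 1 < m) (hm''pos : 0 < m'') (hm''dvd : m'' ∣ m)
    (β : Fin n → ℚ)
    (hβm : ∀ i, IsIntQ ((m : ℚ) * β i))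
    (hord : ∀ k : ℕ, 0 < k → k < m → ∃ i, ¬ IsIntQ ((k : ℚ) * β i))
    (ds : Multiset ℕ) (ws : Multiset (ℕ × ℚ))
    (hds : ∀ d ∈ ds, 0 < d ∧ d ∣ m)
    (hws : ∀ p ∈ ws, 0 < p.1 ∧ p.1 ∣ m ∧ ∃ t : ℤ, p.2 = (t : ℚ) / m)
    (S : Finset (Fin n))
    (hU : S.val.map (fun i => ((β i : ℚ) : AddCircle (1 : ℚ))) = ds.bind VdExp)
    (hW : Sᶜ.val.map (fun i => ((β i : ℚ) : AddCircle (1 : ℚ))) =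
      ws.bind (fun p => WdExp p.1 p.2))
    (hadm : ∀ k : ℕ, k ∣ m → k < m →
      ((∃ i ∈ S, ¬ IsIntQ ((k : ℚ) * β i)) ∨ ∃ p ∈ ws, 1 < p.1 / Nat.gcd p.1 k))
    (j : Fin n) (hδU : j ∈ S)
    (hqr1 : ∀ i, i ≠ j → IsIntQ ((m'' : ℚ) * β i))
    (hqr2 : ¬ IsIntQ ((m'' : ℚ) * β j)) :
    (∃ t : ℤ, (m'' : ℚ) * β j = (t : ℚ) + 1 / 2) ∧
    m / Nat.gcd m m'' = 2 ∧
    Odd (m / 2) ∧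
    (∃ t : ℤ, β j = (t : ℚ) + 1 / 2) :=
  stmt_6_general m m'' n hm β hβm hord ds S hU j hδU hqr1 hqr2
end

section
/- Fix a prime p and a ℤ_p-lattice (or a collection of nonnegative integers n_{p,k} with n_{p,0} > 0 and n_{p,μ} > 0, where μ = μ(p) is the largest index with n_{p,μ} ≠ 0, and Σ_k n_{p,k} = n + 2). Define m_{p,j} = Σ_{k≥0} |k − j|·n_{p,k} − μ for any index j with n_{p,j} ≠ 0. Then m_{p,j} ≥ max(0, n − n_{p,j}). -/
/-!
Write `S = ∑ₖ |k - j| f k`. The endpoints `0` and `μ` carry positive weight and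
`|0 - j| + |μ - j| = μ`, so `S ≥ μ`. For the other bound, every `k ≠ j` has `|k - j| ≥ 1`, so
`S - ∑_{k ≠ j} f k = ∑_{k ≠ j} (|k - j| - 1) f k` is at least the contribution of the (at most two)
endpoints different from `j`, which is `μ - 2` or more; since `∑_{k ≠ j} f k = n + 2 - f j`, this
gives `S ≥ n + μ - f j`.
-/

open Finset

theorem sum_le_sum_mul_of_one_le {ι R : Type*} [Semiring R] [PartialOrder R] [IsOrderedRing R]
    {s t : Finset ι} {a b : ι → R} (hts : t ⊆ s) (ha : ∀ k ∈ s, 0 ≤ a k)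
    (hb : ∀ k ∈ s, 0 ≤ b k) (hb_one : ∀ k ∈ t, 1 ≤ b k) :
    ∑ k ∈ t, a k ≤ ∑ k ∈ s, a k * b k :=
  calc ∑ k ∈ t, a k ≤ ∑ k ∈ t, a k * b k :=
        sum_le_sum fun k hk => le_mul_of_one_le_right (ha k (hts hk)) (hb_one k hk)
    _ ≤ ∑ k ∈ s, a k * b k :=
        sum_le_sum_of_subset_of_nonneg hts fun k hk _ => mul_nonneg (ha k hk) (hb k hk)

theorem sum_pair_abs_sub_of_le {j μ : ℕ} (hjμ : j ≤ μ) :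
    ∑ k ∈ ({0, μ} : Finset ℕ), |(k : ℤ) - j| = μ := by
  rcases Nat.eq_zero_or_pos μ with rfl | hμ
  · simp [show j = 0 by omega]
  · rw [sum_pair hμ.ne, abs_of_nonpos (by simp), abs_of_nonneg (by omega)]
    push_cast
    ring

section

variable {μ j : ℕ} {f : ℕ → ℕ} (hjμ : j ≤ μ) (h0 : 0 < f 0) (hμ : 0 < f μ)
include hjμ h0 hμ

theorem le_sum_abs_sub_mul : (μ : ℤ) ≤ ∑ k ∈ range (μ + 1), |(k : ℤ) - j| * f k := by
  rw [← sum_pair_abs_sub_of_le hjμ]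
  refine sum_le_sum_mul_of_one_le ?_ (fun _ _ => abs_nonneg _) (fun _ _ => by positivity) ?_
  · intro k hk
    simp only [mem_insert, mem_singleton] at hk
    simp only [mem_range]
    omega
  · intro k hk
    simp only [mem_insert, mem_singleton] at hk
    rcases hk with rfl | rfl <;> exact_mod_cast ‹_›

theorem sum_erase_add_sub_two_le_sum_abs_sub_mul :
    ∑ k ∈ (range (μ + 1)).erase j, (f k : ℤ) + μ - 2 ≤
      ∑ k ∈ range (μ + 1), |(k : ℤ) - j| * f k := by
  set s := (range (μ + 1)).erase j
  set t := ({0, μ} : Finset ℕ).erase j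
  have hsum_t : ∑ k ∈ t, |(k : ℤ) - j| = μ := by
    rw [sum_erase _ (by simp), sum_pair_abs_sub_of_le hjμ]
  have hcard_t : t.card ≤ 2 := card_erase_le.trans card_le_two
  have hts : t ⊆ s := by
    refine erase_subset_erase _ fun k hk => ?_
    simp only [mem_insert, mem_singleton] at hk
    simp only [mem_range]
    omega
  have hendpoints : ∑ k ∈ t, (|(k : ℤ) - j| - 1) ≤ ∑ k ∈ s, (|(k : ℤ) - j| - 1) * f k := by
    refine sum_le_sum_mul_of_one_le hts (fun k hk => ?_) (fun _ _ => by positivity) ?_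
    · have hkj : (k : ℤ) - j ≠ 0 := sub_ne_zero.mpr (by exact_mod_cast ne_of_mem_erase hk)
      linarith [Int.one_le_abs hkj]
    · intro k hk
      simp only [t, mem_erase, mem_insert, mem_singleton] at hk
      rcases hk.2 with rfl | rfl <;> exact_mod_cast ‹_›
  have hsplit : ∑ k ∈ range (μ + 1), |(k : ℤ) - j| * f k =
      ∑ k ∈ s, (|(k : ℤ) - j| - 1) * f k + ∑ k ∈ s, (f k : ℤ) := by
    rw [← sum_erase (range (μ + 1)) (a := j) (by simp), ← sum_add_distrib]
    exact sum_congr rfl fun _ _ => by ring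
  rw [sum_sub_distrib, hsum_t, sum_const, nsmul_one] at hendpoints
  have : (t.card : ℤ) ≤ 2 := by exact_mod_cast hcard_t
  linarith

end

/-- Purely combinatorial inequality on Jordan-component ranks:
if `f 0 ≥ 1`, `f μ ≥ 1`, `f k = 0` for `k > μ`, `∑ f k = n + 2` and `f j ≥ 1`, then
`m_{p,j} := ∑_k |k - j| · f k − μ  ≥  max(0, n − f j)`. -/
theorem stmt_9 (n μ j : ℕ) (f : ℕ → ℕ)
    (hsupp : ∀ k, μ < k → f k = 0)
    (h0 : 0 < f 0) (hμ : 0 < f μ) (hj : 0 < f j)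
    (hsum : ∑ k ∈ Finset.range (μ + 1), f k = n + 2) :
    max 0 ((n : ℤ) - f j) ≤ (∑ k ∈ Finset.range (μ + 1), |(k : ℤ) - j| * f k) - μ := by
  have hjμ : j ≤ μ := by
    by_contra h
    exact hj.ne' (hsupp j (by omega))
  have hrest : ∑ k ∈ (range (μ + 1)).erase j, (f k : ℤ) = n + 2 - f j := by
    rw [sum_erase_eq_sub (by simpa using Nat.lt_succ_of_le hjμ)]
    exact_mod_cast congrArg (fun x : ℕ => (x : ℤ) - f j) hsum
  have hμ_le := le_sum_abs_sub_mul hjμ h0 hμ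
  have hrest_le := sum_erase_add_sub_two_le_sum_abs_sub_mul hjμ h0 hμ
  exact max_le (by linarith) (by linarith)
end

section
/- Let L be an integral lattice of signature (2,n), l ∈ L a reflective vector of non-split type (i.e., ℤl ⊕ K has index 2 in L, where K = l^⊥ ∩ L), and l₀ ∈ L a generator of L/(ℤl ⊕ K) ≅ ℤ/2 with orthogonal projection k₀ ∈ K^∨ to K⊗ℚ. Then x = [k₀] ∈ A_K has order 2, and for γ ∈ O(K), the isometry (id, γ) of ℤl ⊕ K extends to an isometry of L if and only if γ fixes the element x of A_K. Consequently the stabilizer Γ_l of l in O(L), viewed inside O(K), equals the stabilizer of x in O(K), and [O(K) : Γ_l] is at most the number of order-2 elements of A_K. -/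
/-- The dual lattice `L^∨ = {v ∈ V : B(v, L) ⊆ ℤ}` of a `ℤ`-lattice `L` in a rational
quadratic space `(V, B)`. -/
def dualLattice {V : Type*} [AddCommGroup V] [Module ℚ V]
    (B : V →ₗ[ℚ] V →ₗ[ℚ] ℚ) (L : Submodule ℤ V) : Submodule ℤ V where
  carrier := {v | ∀ x ∈ L, ∃ t : ℤ, B v x = (t : ℚ)}
  add_mem' := by
    intro a b ha hb x hx
    obtain ⟨p, hp⟩ := ha x hx
    obtain ⟨q, hq⟩ := hb x hx
    exact ⟨p + q, by rw [map_add, LinearMap.add_apply, hp, hq]; push_cast; ring⟩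
  zero_mem' := by
    intro x hx
    exact ⟨0, by rw [map_zero, LinearMap.zero_apply]; norm_num⟩
  smul_mem' := by
    intro n v hv x hx
    obtain ⟨p, hp⟩ := hv x hx
    refine ⟨n * p, ?_⟩
    rw [map_zsmul, LinearMap.smul_apply, hp, zsmul_eq_mul]
    push_cast; ring

/-!
Write `l₀ = k₀ + α l` with `α = (l₀, l) / (l, l)`. Since `σ_l(l₀) = l₀ - 2α l ∈ L`, we get
`2 k₀ = l₀ + σ_l(l₀) ∈ K`, while `k₀ ∈ K` would make `α l ∈ L`, hence `α ∈ ℤ` by primitivity of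
`l`, and `l₀ ∈ ℤl ⊕ K`. An isometry `γ` fixing `l` and preserving `K` sends `l₀` to
`l₀ + (γ k₀ - k₀)`; as `L = (ℤl ⊕ K) ∪ (l₀ + (ℤl ⊕ K))`, it preserves `L` exactly when
`γ k₀ - k₀ ∈ K`. So the orbit of `[k₀]` consists of classes of order two in `K^∨ / K`, and these
form a finite set because `K` is finitely generated.
-/

theorem AddSubgroup.mem_or_sub_mem_of_relIndex_eq_two {G : Type*} [AddGroup G]
    {H K : AddSubgroup G} (hHK : H.relIndex K = 2) {a b : G} (ha : a ∈ K) (haH : a ∉ H)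
    (hb : b ∈ K) : b ∈ H ∨ b - a ∈ H := by
  have key := add_mem_iff_of_index_two hHK (a := ⟨b, hb⟩) (b := ⟨-a, neg_mem ha⟩)
  simp only [mem_addSubgroupOf, coe_add, neg_mem_iff, ← sub_eq_add_neg] at key
  tauto

theorem AddSubgroup.map_le_of_relIndex_eq_two {G G' : Type*} [AddGroup G] [AddGroup G']
    {H K : AddSubgroup G} (hHK : H.relIndex K = 2) {a : G} (ha : a ∈ K) (haH : a ∉ H)
    {f : G →+ G'} {M : AddSubgroup G'} (hfH : H.map f ≤ M) (hfa : f a ∈ M) : K.map f ≤ M := by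
  rintro _ ⟨b, hb, rfl⟩
  rcases mem_or_sub_mem_of_relIndex_eq_two hHK ha haH hb with hbH | hbaH
  · exact hfH ⟨b, hbH, rfl⟩
  · simpa using add_mem (hfH ⟨b - a, hbaH, rfl⟩) hfa

theorem Submodule.addOrderOf_mk_eq_two {M : Type*} [AddCommGroup M] {K : Submodule ℤ M} {v : M}
    (hv : v ∉ K) (h2v : (2 : ℤ) • v ∈ K) : addOrderOf (Quotient.mk v : M ⧸ K) = 2 := by
  refine addOrderOf_eq_prime ?_ (by rwa [Ne, Quotient.mk_eq_zero])
  rwa [← natCast_zsmul, Nat.cast_ofNat, ← Quotient.mk_smul, Quotient.mk_eq_zero]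

section

variable {V : Type*} [AddCommGroup V] [Module ℚ V]

theorem Submodule.finite_setOf_nsmul_eq_zero {K : Submodule ℤ V} (hK : K.FG) {n : ℕ}
    (hn : n ≠ 0) : {y : V ⧸ K | n • y = 0}.Finite := by
  have hinv : ∀ v : V, n • (n : ℚ)⁻¹ • v = v := fun v => by
    rw [← Nat.cast_smul_eq_nsmul ℚ, smul_smul, mul_inv_cancel₀ (by exact_mod_cast hn), one_smul]
  -- the set lies in the image of `k ↦ [k / n]`, a finitely generated torsion group
  let φ : K →ₗ[ℤ] V ⧸ K := K.mkQ ∘ₗ DistribSMul.toLinearMap ℤ V (n : ℚ)⁻¹ ∘ₗ K.subtype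
  have : Module.Finite ℤ K := Module.Finite.iff_fg.mpr hK
  have : Finite (LinearMap.range φ) := Module.finite_of_fg_torsion _ fun ⟨_, k, hk⟩ =>
    ⟨⟨n, mem_nonZeroDivisors_of_ne_zero (by exact_mod_cast hn)⟩, by
      subst hk; ext; simp [φ, ← Quotient.mk_smul, hinv]⟩
  refine (Set.toFinite (LinearMap.range φ : Set (V ⧸ K))).subset fun y hy => ?_
  induction y using Quotient.induction_on with | H w => ?_
  have hw : n • w ∈ K := by simpa [← Quotient.mk_smul] using hy
  exact ⟨⟨n • w, hw⟩, by simp [φ, ← Nat.cast_smul_eq_nsmul ℚ, smul_smul, hn]⟩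

theorem exists_intCast_eq_of_smul_mem {L : Submodule ℤ V} {l : V} (hl : l ∈ L)
    (hprim : ∀ (c : ℤ) (x : V), x ∈ L → c • x = l → IsUnit c) {q : ℚ} (hq : q • l ∈ L) :
    ∃ m : ℤ, q = m := by
  obtain ⟨u, v, huv⟩ : IsCoprime q.num q.den := Int.isCoprime_iff_gcd_eq_one.mpr q.reduced
  have hden : (q.den : ℤ) • q • l = q.num • l := by
    rw [← Int.cast_smul_eq_zsmul ℚ, ← Int.cast_smul_eq_zsmul ℚ, smul_smul]
    push_cast
    rw [mul_comm, Rat.mul_den_eq_num]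
  have hunit : IsUnit (q.den : ℤ) := hprim _ (u • q • l + v • l)
    (add_mem (L.smul_mem u hq) (L.smul_mem v hl)) (by
      rw [smul_add, smul_comm _ u, hden, smul_smul, smul_smul, ← add_smul, mul_comm _ v, huv,
        one_smul])
  exact ⟨q.num, ((Rat.den_eq_one_iff q).mp (by simpa using Int.isUnit_iff_natAbs_eq.mp hunit)).symm⟩

namespace LinearEquiv

variable {γ : V ≃ₗ[ℚ] V} {K : Submodule ℤ V}

theorem apply_mem_iff_of_map_eq (hK : K.map ((γ : V →ₗ[ℚ] V).restrictScalars ℤ) = K) {v : V} :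
    γ v ∈ K ↔ v ∈ K := by
  refine ⟨fun hv => ?_, fun hv => hK ▸ ⟨v, hv, rfl⟩⟩
  rw [← hK] at hv
  obtain ⟨w, hw, hwv⟩ := hv
  rwa [← γ.injective hwv]

theorem symm_apply_mem_iff_of_map_eq (hK : K.map ((γ : V →ₗ[ℚ] V).restrictScalars ℤ) = K)
    {v : V} : γ.symm v ∈ K ↔ v ∈ K := by
  rw [← apply_mem_iff_of_map_eq hK, apply_symm_apply]

theorem map_restrictScalars_eq_of_forall_mem (h : ∀ v ∈ K, γ v ∈ K)
    (h' : ∀ v ∈ K, γ.symm v ∈ K) : K.map ((γ : V →ₗ[ℚ] V).restrictScalars ℤ) = K :=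
  le_antisymm (by rintro _ ⟨v, hv, rfl⟩; exact h v hv)
    fun v hv => ⟨γ.symm v, h' v hv, γ.apply_symm_apply v⟩

end LinearEquiv

theorem LinearEquiv.apply_mem_dualLattice {B : V →ₗ[ℚ] V →ₗ[ℚ] ℚ} {K : Submodule ℤ V}
    {γ : V ≃ₗ[ℚ] V} (hiso : ∀ x y, B (γ x) (γ y) = B x y)
    (hK : K.map ((γ : V →ₗ[ℚ] V).restrictScalars ℤ) = K) {w : V} (hw : w ∈ dualLattice B K) :
    γ w ∈ dualLattice B K := by
  intro x hx
  rw [← γ.apply_symm_apply x, hiso]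
  exact hw _ ((symm_apply_mem_iff_of_map_eq hK).mpr hx)

section Lattice

variable {B : V →ₗ[ℚ] V →ₗ[ℚ] ℚ} {L K : Submodule ℤ V} {l l₀ k₀ : V} {c : ℚ}

theorem mem_iff_of_eq_inf_ker (hK : K = L ⊓ (LinearMap.ker (B l)).restrictScalars ℤ) {v : V} :
    v ∈ K ↔ v ∈ L ∧ B l v = 0 := by
  subst hK
  rfl

theorem apply_sub_div_smul_eq_zero (hsymm : ∀ x y, B x y = B y x) (hll : B l l ≠ 0) (v : V) :
    B l (v - (B v l / B l l) • l) = 0 := by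
  rw [map_sub, map_smul, smul_eq_mul, hsymm l v, div_mul_cancel₀ _ hll, sub_self]

theorem sub_smul_mem_dualLattice (hint : ∀ x ∈ L, ∀ y ∈ L, ∃ t : ℤ, B x y = (t : ℚ))
    (hK : K = L ⊓ (LinearMap.ker (B l)).restrictScalars ℤ) (hl₀ : l₀ ∈ L) (c : ℚ) :
    l₀ - c • l ∈ dualLattice B K := by
  intro k hk
  obtain ⟨hkL, hlk⟩ := (mem_iff_of_eq_inf_ker hK).mp hk
  obtain ⟨t, ht⟩ := hint l₀ hl₀ k hkL
  exact ⟨t, by simp [hlk, ht]⟩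

theorem two_smul_sub_div_smul_mem (hsymm : ∀ x y, B x y = B y x) (hll : B l l ≠ 0)
    (hrefl : ∀ v ∈ L, v - (2 * B v l / B l l) • l ∈ L)
    (hK : K = L ⊓ (LinearMap.ker (B l)).restrictScalars ℤ) (hl₀ : l₀ ∈ L) :
    (2 : ℤ) • (l₀ - (B l₀ l / B l l) • l) ∈ K := by
  have hreflect :
      (2 : ℤ) • (l₀ - (B l₀ l / B l l) • l) = l₀ + (l₀ - (2 * B l₀ l / B l l) • l) := by
    rw [two_zsmul]
    module
  rw [mem_iff_of_eq_inf_ker hK, map_zsmul, apply_sub_div_smul_eq_zero hsymm hll, smul_zero,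
    hreflect]
  exact ⟨add_mem hl₀ (hrefl l₀ hl₀), rfl⟩

theorem sub_smul_not_mem (hl : l ∈ L) (hprim : ∀ (c : ℤ) (x : V), x ∈ L → c • x = l → IsUnit c)
    (hKL : K ≤ L) (hl₀ : l₀ ∈ L) (hl₀S : l₀ ∉ Submodule.span ℤ {l} ⊔ K) :
    l₀ - c • l ∉ K := by
  intro hk
  obtain ⟨m, rfl⟩ := exists_intCast_eq_of_smul_mem hl hprim (q := c)
    (by simpa using sub_mem hl₀ (hKL hk))
  refine hl₀S (Submodule.mem_sup.mpr
    ⟨m • l, Submodule.mem_span_singleton.mpr ⟨m, rfl⟩, _, hk, ?_⟩)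
  rw [Int.cast_smul_eq_zsmul]
  abel

theorem apply_sub_self_eq_of_apply_eq {γ : V →ₗ[ℚ] V} (hγl : γ l = l)
    (hk₀ : k₀ = l₀ - c • l) : γ k₀ - k₀ = γ l₀ - l₀ := by
  rw [hk₀, map_sub, map_smul, hγl]
  abel

theorem apply_sub_self_mem (hK : K = L ⊓ (LinearMap.ker (B l)).restrictScalars ℤ)
    {γ : V →ₗ[ℚ] V} (hγl : γ l = l) (hiso : ∀ x y, B (γ x) (γ y) = B x y)
    (hl₀ : l₀ ∈ L) (hγl₀ : γ l₀ ∈ L) (hk₀ : k₀ = l₀ - c • l) : γ k₀ - k₀ ∈ K := by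
  rw [apply_sub_self_eq_of_apply_eq hγl hk₀, mem_iff_of_eq_inf_ker hK, map_sub, ← hiso l l₀, hγl,
    sub_self]
  exact ⟨sub_mem hγl₀ hl₀, rfl⟩

theorem forall_apply_mem_of_apply_sub_self_mem (hl : l ∈ L) (hKL : K ≤ L)
    (hnonsplit : (Submodule.span ℤ {l} ⊔ K).toAddSubgroup.relIndex L.toAddSubgroup = 2)
    (hl₀ : l₀ ∈ L) (hl₀S : l₀ ∉ Submodule.span ℤ {l} ⊔ K) (hk₀ : k₀ = l₀ - c • l)
    {γ : V →ₗ[ℚ] V} (hγl : γ l = l) (hγK : ∀ k ∈ K, γ k ∈ K) (hγk₀ : γ k₀ - k₀ ∈ K) :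
    ∀ v ∈ L, γ v ∈ L := by
  have hS : Submodule.span ℤ {l} ⊔ K ≤ L.comap (γ.restrictScalars ℤ) :=
    sup_le (Submodule.span_le.mpr (by simpa [hγl] using hl)) fun k hk => hKL (hγK k hk)
  have hγl₀ : γ l₀ ∈ L := by
    have := add_mem (hKL (apply_sub_self_eq_of_apply_eq hγl hk₀ ▸ hγk₀)) hl₀
    rwa [sub_add_cancel] at this
  have hmap := AddSubgroup.map_le_of_relIndex_eq_two hnonsplit hl₀ hl₀S
    (f := γ.toAddMonoidHom) (M := L.toAddSubgroup) (by rintro _ ⟨s, hs, rfl⟩; exact hS hs) hγl₀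
  exact fun v hv => hmap ⟨v, hv, rfl⟩

theorem map_eq_of_apply_sub_self_mem (hl : l ∈ L) (hKL : K ≤ L)
    (hnonsplit : (Submodule.span ℤ {l} ⊔ K).toAddSubgroup.relIndex L.toAddSubgroup = 2)
    (hl₀ : l₀ ∈ L) (hl₀S : l₀ ∉ Submodule.span ℤ {l} ⊔ K) (hk₀ : k₀ = l₀ - c • l)
    {γ : V ≃ₗ[ℚ] V} (hγl : γ l = l) (hγK : K.map ((γ : V →ₗ[ℚ] V).restrictScalars ℤ) = K)
    (hγk₀ : γ k₀ - k₀ ∈ K) : L.map ((γ : V →ₗ[ℚ] V).restrictScalars ℤ) = L := by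
  have hγl' : γ.symm l = l := γ.symm_apply_eq.mpr hγl.symm
  have hγk₀' : γ.symm k₀ - k₀ ∈ K := by
    have : γ.symm k₀ - k₀ = -γ.symm (γ k₀ - k₀) := by simp
    exact this ▸ neg_mem ((γ.symm_apply_mem_iff_of_map_eq hγK).mpr hγk₀)
  exact γ.map_restrictScalars_eq_of_forall_mem
    (forall_apply_mem_of_apply_sub_self_mem hl hKL hnonsplit hl₀ hl₀S hk₀ (γ := γ.toLinearMap)
      hγl (fun _ hk => (γ.apply_mem_iff_of_map_eq hγK).mpr hk) hγk₀)
    (forall_apply_mem_of_apply_sub_self_mem hl hKL hnonsplit hl₀ hl₀S hk₀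
      (γ := γ.symm.toLinearMap) hγl' (fun _ hk => (γ.symm_apply_mem_iff_of_map_eq hγK).mpr hk)
      hγk₀')

end Lattice

end

theorem stmt_12_general (V : Type*) [AddCommGroup V] [Module ℚ V]
    (B : V →ₗ[ℚ] V →ₗ[ℚ] ℚ)
    (hsymm : ∀ x y, B x y = B y x)
    (L : Submodule ℤ V) (hfg : L.FG)
    (hint : ∀ x ∈ L, ∀ y ∈ L, ∃ t : ℤ, B x y = (t : ℚ))
    (l : V) (hl : l ∈ L) (hll : B l l < 0)
    (hprim : ∀ (c : ℤ) (x : V), x ∈ L → c • x = l → IsUnit c)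
    (hrefl : ∀ v ∈ L, v - (2 * B v l / B l l) • l ∈ L)
    (K : Submodule ℤ V)
    (hK : K = L ⊓ (LinearMap.ker (B l)).restrictScalars ℤ)
    (S : Submodule ℤ V) (hS : S = Submodule.span ℤ {l} ⊔ K)
    (hnonsplit : S.toAddSubgroup.relIndex L.toAddSubgroup = 2)
    (l₀ : V) (hl₀ : l₀ ∈ L) (hl₀S : l₀ ∉ S)
    (k₀ : V) (hk₀ : k₀ = l₀ - (B l₀ l / B l l) • l) :
    ((∀ k ∈ K, ∃ t : ℤ, B k₀ k = (t : ℚ)) ∧ k₀ ∉ K ∧ (2 : ℤ) • k₀ ∈ K) ∧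
    (∀ γ : V ≃ₗ[ℚ] V, γ l = l → (∀ x y, B (γ x) (γ y) = B x y) →
      Submodule.map ((γ : V →ₗ[ℚ] V).restrictScalars ℤ) K = K →
      (Submodule.map ((γ : V →ₗ[ℚ] V).restrictScalars ℤ) L = L ↔ γ k₀ - k₀ ∈ K)) ∧
    (∀ γ : V ≃ₗ[ℚ] V, γ l = l → (∀ x y, B (γ x) (γ y) = B x y) →
      Submodule.map ((γ : V →ₗ[ℚ] V).restrictScalars ℤ) K = K →
      (γ k₀ ∉ K ∧ (2 : ℤ) • (γ k₀) ∈ K)) ∧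
    Nat.card {y : V ⧸ K | ∃ γ : V ≃ₗ[ℚ] V,
        (γ l = l ∧ (∀ x y, B (γ x) (γ y) = B x y) ∧
          Submodule.map ((γ : V →ₗ[ℚ] V).restrictScalars ℤ) K = K) ∧
        y = Submodule.Quotient.mk (γ k₀)} ≤
      Nat.card {y : V ⧸ K | addOrderOf y = 2 ∧
        ∃ w, w ∈ dualLattice B K ∧ B w l = 0 ∧ y = Submodule.Quotient.mk w} := by
  subst hS
  have hKL : K ≤ L := hK ▸ inf_le_left
  have hk₀K : k₀ ∉ K := hk₀ ▸ sub_smul_not_mem hl hprim hKL hl₀ hl₀S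
  have h2k₀ : (2 : ℤ) • k₀ ∈ K := hk₀ ▸ two_smul_sub_div_smul_mem hsymm hll.ne hrefl hK hl₀
  have hdual : k₀ ∈ dualLattice B K := hk₀ ▸ sub_smul_mem_dualLattice hint hK hl₀ _
  have hk₀l : B k₀ l = 0 := by rw [hsymm, hk₀, apply_sub_div_smul_eq_zero hsymm hll.ne]
  have horder : ∀ γ : V ≃ₗ[ℚ] V, Submodule.map ((γ : V →ₗ[ℚ] V).restrictScalars ℤ) K = K →
      γ k₀ ∉ K ∧ (2 : ℤ) • (γ k₀) ∈ K := fun γ hγK =>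
    ⟨(γ.apply_mem_iff_of_map_eq hγK).not.mpr hk₀K,
      by rwa [← map_zsmul, γ.apply_mem_iff_of_map_eq hγK]⟩
  refine ⟨⟨hdual, hk₀K, h2k₀⟩, fun γ hγl hiso hγK => ⟨fun hγL => ?_,
    map_eq_of_apply_sub_self_mem hl hKL hnonsplit hl₀ hl₀S hk₀ hγl hγK⟩,
    fun γ _ _ => horder γ, ?_⟩
  · exact apply_sub_self_mem hK (γ := γ.toLinearMap) hγl hiso hl₀ (hγL ▸ ⟨l₀, hl₀, rfl⟩) hk₀
  have : IsNoetherian ℤ L := isNoetherian_of_fg_of_noetherian L hfg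
  refine Nat.card_mono ((K.finite_setOf_nsmul_eq_zero (.of_le_of_isNoetherian hKL)
    two_ne_zero).subset fun y hy => hy.1 ▸ addOrderOf_nsmul_eq_zero y) ?_
  rintro _ ⟨γ, ⟨hγl, hiso, hγK⟩, rfl⟩
  refine ⟨K.addOrderOf_mk_eq_two (horder γ hγK).1 (horder γ hγK).2, γ k₀,
    γ.apply_mem_dualLattice hiso hγK hdual, ?_, rfl⟩
  rw [← hγl, hiso, hk₀l]

/-- Let `L` be a lattice of signature `(2,n)` (here: a nondegenerate
integral lattice in `(V,B)`), `l ∈ L` a reflective vector of non-split type, i.e.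
`S = ℤl ⊕ K` has index 2 in `L` where `K = l^⊥ ∩ L`, and `l₀ ∈ L` a generator of
`L/S ≅ ℤ/2` with orthogonal projection `k₀ = l₀ − (B(l₀,l)/B(l,l))·l ∈ K^∨`.  Then:
* `x = [k₀] ∈ A_K` has order 2 (`k₀ ∈ K^∨`, `k₀ ∉ K`, `2k₀ ∈ K`);
* for an isometry `γ` of `V` fixing `l` and mapping `K` onto itself, the isometry
  `(id, γ)` of `ℤl ⊕ K` preserves `L` iff `γ` fixes `x ∈ A_K`, i.e. `γk₀ − k₀ ∈ K`;
  hence the stabilizer `Γ_l ≤ O(K)` of `l` equals the stabilizer of `x` in `O(K)`;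
* every `O(K)`-translate `[γk₀]` has order 2 in `A_K`, so the index `[O(K) : Γ_l]`,
  which equals the cardinality of the orbit `O(K)·x`, is at most the number of order-2
  elements of `A_K`. -/
theorem stmt_12 (V : Type*) [AddCommGroup V] [Module ℚ V] [FiniteDimensional ℚ V]
    (B : V →ₗ[ℚ] V →ₗ[ℚ] ℚ)
    (hsymm : ∀ x y, B x y = B y x)
    (hnd : ∀ x : V, x ≠ 0 → ∃ y, B x y ≠ 0)
    (L : Submodule ℤ V) (hfg : L.FG)
    (hspan : Submodule.span ℚ (L : Set V) = ⊤)
    (hint : ∀ x ∈ L, ∀ y ∈ L, ∃ t : ℤ, B x y = (t : ℚ))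
    (l : V) (hl : l ∈ L) (hll : B l l < 0)
    (hprim : ∀ (c : ℤ) (x : V), x ∈ L → c • x = l → IsUnit c)
    (hrefl : ∀ v ∈ L, v - (2 * B v l / B l l) • l ∈ L)
    (K : Submodule ℤ V)
    (hK : K = L ⊓ (LinearMap.ker (B l)).restrictScalars ℤ)
    (S : Submodule ℤ V) (hS : S = Submodule.span ℤ {l} ⊔ K)
    (hnonsplit : S.toAddSubgroup.relIndex L.toAddSubgroup = 2)
    (l₀ : V) (hl₀ : l₀ ∈ L) (hl₀S : l₀ ∉ S)
    (k₀ : V) (hk₀ : k₀ = l₀ - (B l₀ l / B l l) • l) :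
    ((∀ k ∈ K, ∃ t : ℤ, B k₀ k = (t : ℚ)) ∧ k₀ ∉ K ∧ (2 : ℤ) • k₀ ∈ K) ∧
    (∀ γ : V ≃ₗ[ℚ] V, γ l = l → (∀ x y, B (γ x) (γ y) = B x y) →
      Submodule.map ((γ : V →ₗ[ℚ] V).restrictScalars ℤ) K = K →
      (Submodule.map ((γ : V →ₗ[ℚ] V).restrictScalars ℤ) L = L ↔ γ k₀ - k₀ ∈ K)) ∧
    (∀ γ : V ≃ₗ[ℚ] V, γ l = l → (∀ x y, B (γ x) (γ y) = B x y) →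
      Submodule.map ((γ : V →ₗ[ℚ] V).restrictScalars ℤ) K = K →
      (γ k₀ ∉ K ∧ (2 : ℤ) • (γ k₀) ∈ K)) ∧
    Nat.card {y : V ⧸ K | ∃ γ : V ≃ₗ[ℚ] V,
        (γ l = l ∧ (∀ x y, B (γ x) (γ y) = B x y) ∧
          Submodule.map ((γ : V →ₗ[ℚ] V).restrictScalars ℤ) K = K) ∧
        y = Submodule.Quotient.mk (γ k₀)} ≤
      Nat.card {y : V ⧸ K | addOrderOf y = 2 ∧
        ∃ w, w ∈ dualLattice B K ∧ B w l = 0 ∧ y = Submodule.Quotient.mk w} :=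
  stmt_12_general V B hsymm L hfg hint l hl hll hprim hrefl K hK S hS hnonsplit l₀ hl₀ hl₀S k₀ hk₀
end

section
/- Let θ = (U, (d_i, μ_i)_i) be an admissible data for the cyclic group G = ℤ/m: U is a G-representation defined over ℚ, d_i | m, μ_i ∈ (1/m)ℤ/ℤ, and for every nontrivial subgroup G' = ℤ/m' ⊆ G (with m = m'm''), either U|_{G'} is nontrivial or d_i/gcd(d_i, m'') > 1 for some i. Let V_θ = U ⊕ ⊕_i W_{d_i,μ_i} with W_{d,μ} = ⊕_{k∈ℤ/d} χ_{k/d+μ}. If a generator g of G does not act as a reflection on V_θ, then the Reid–Tai sum Σ_{V_θ}(g) = Σ_j α_j ≥ 1, where the eigenvalues of g on V_θ are e(α_j) with 0 ≤ α_j < 1. -/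
/-!
A block `V_d` with `d > 2` contributes at least `1/d + (d-1)/d = 1` to the Reid–Tai sum. A block
`W_{d,μ}` contributes at least `(d-1)/2`: writing `dμ = c + r` with `c ∈ ℤ`, `0 ≤ r < 1`, its
exponents reduce mod 1 to `(s + r)/d` where `s = (k + c) mod d` runs over `0, …, d-1`. So if the sum
is below 1, every block has `d ≤ 2`. For `m > 2` the subgroup of index `gcd(2, m)` then acts
trivially, contradicting admissibility; for `m = 2` all exponents lie in `½ℤ` and a sum below 1
leaves exactly one of them non-integral, i.e. `g` is a reflection.
-/

lemma fract_natCast_div_of_lt {k d : ℕ} (h : k < d) : Int.fract ((k : ℚ) / d) = k / d :=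
  Int.fract_eq_self.mpr
    ⟨by positivity, (div_lt_one (by exact_mod_cast (Nat.zero_le k).trans_lt h)).mpr
      (by exact_mod_cast h)⟩

lemma one_le_sum_fract_div_coprime {d : ℕ} (hd : 2 < d) :
    1 ≤ ∑ k ∈ Finset.univ.filter fun k : Fin d => Nat.Coprime k d, Int.fract ((k : ℚ) / d) := by
  let a : Fin d := ⟨1, by omega⟩
  let b : Fin d := ⟨d - 1, by omega⟩
  have hab : a ≠ b := by simp only [a, b, ne_eq, Fin.mk.injEq]; omega
  have hsub : {a, b} ⊆ Finset.univ.filter fun k : Fin d => Nat.Coprime k d := by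
    simp only [Finset.insert_subset_iff, Finset.singleton_subset_iff, Finset.mem_filter,
      Finset.mem_univ, true_and, a, b, Nat.coprime_one_left_eq_true,
      Nat.coprime_self_sub_left (by omega : 1 ≤ d)]
  calc 1 = Int.fract ((a : ℚ) / d) + Int.fract ((b : ℚ) / d) := by
        rw [fract_natCast_div_of_lt a.isLt, fract_natCast_div_of_lt b.isLt, ← add_div]
        simp only [a, b, Nat.cast_sub (by omega : 1 ≤ d)]
        field_simp
        ring
    _ = ∑ k ∈ {a, b}, Int.fract ((k : ℚ) / d) :=
        (Finset.sum_pair (f := fun k : Fin d => Int.fract ((k : ℚ) / d)) hab).symm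
    _ ≤ _ := Finset.sum_le_sum_of_subset_of_nonneg hsub fun _ _ _ => Int.fract_nonneg _

lemma emod_floor_div_le_fract_div (x : ℚ) {d : ℕ} (hd : 0 < d) :
    ((⌊x⌋ % d : ℤ) : ℚ) / d ≤ Int.fract (x / d) := by
  have hd' : (0 : ℚ) < d := by exact_mod_cast hd
  have hs0 : 0 ≤ ⌊x⌋ % d := Int.emod_nonneg _ (by omega)
  have hs1 : ⌊x⌋ % d + 1 ≤ d := by have := Int.emod_lt_of_pos ⌊x⌋ (by omega : (0 : ℤ) < d); omega
  have hfract : Int.fract (x / d) = ((⌊x⌋ % d : ℤ) + Int.fract x) / d := by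
    rw [Int.fract_eq_iff]
    refine ⟨by positivity, ?_, ⌊x⌋ / d, ?_⟩
    · rw [div_lt_one hd']
      have : ((⌊x⌋ % d + 1 : ℤ) : ℚ) ≤ d := by exact_mod_cast hs1
      push_cast at this
      linarith [Int.fract_lt_one x]
    · have h : ((d * (⌊x⌋ / d) + ⌊x⌋ % d : ℤ) : ℚ) = ⌊x⌋ := by
        exact_mod_cast Int.mul_ediv_add_emod ⌊x⌋ d
      push_cast at h
      rw [Int.fract]
      field_simp
      linarith
  rw [hfract]
  gcongr
  linarith [Int.fract_nonneg x]

open scoped Fin.IntCast in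
lemma sub_one_div_two_le_sum_fract_div_add (d : ℕ) [NeZero d] (μ : ℚ) :
    ((d : ℚ) - 1) / 2 ≤ ∑ k : Fin d, Int.fract ((k : ℚ) / d + μ) := by
  have hd : 0 < d := Nat.pos_of_neZero d
  have hd' : (d : ℚ) ≠ 0 := by positivity
  set c : ℤ := ⌊(d : ℚ) * μ⌋
  have key (k : Fin d) : ((k + (c : Fin d) : Fin d) : ℚ) / d ≤ Int.fract ((k : ℚ) / d + μ) := by
    have hfloor : ⌊(k : ℚ) + d * μ⌋ = k + c := by
      rw [add_comm, Int.floor_add_natCast, add_comm]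
    have hval : (((k + (c : Fin d) : Fin d) : ℕ) : ℤ) = ⌊(k : ℚ) + d * μ⌋ % d := by
      rw [hfloor, Fin.val_add, Fin.val_intCast]
      push_cast [Int.toNat_of_nonneg (Int.emod_nonneg c (by omega : (d : ℤ) ≠ 0))]
      rw [Int.add_emod_emod]
    have hx : ((k : ℚ) + d * μ) / d = (k : ℚ) / d + μ := by field_simp
    calc ((k + (c : Fin d) : Fin d) : ℚ) / d = ((⌊(k : ℚ) + d * μ⌋ % d : ℤ) : ℚ) / d := by
          rw [← hval]; rfl
      _ ≤ _ := hx ▸ emod_floor_div_le_fract_div _ hd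
  have gauss : ∑ k : Fin d, (k : ℚ) = d * (d - 1) / 2 := by
    rw [Fin.sum_univ_eq_sum_range (fun k => (k : ℚ))]
    have h : ((∑ i ∈ Finset.range d, i : ℕ) : ℚ) * 2 = d * (d - 1 : ℕ) := by
      exact_mod_cast Finset.sum_range_id_mul_two d
    push_cast [Nat.cast_sub hd] at h ⊢
    linarith
  calc ((d : ℚ) - 1) / 2 = ∑ k : Fin d, (k : ℚ) / d := by
        rw [← Finset.sum_div, gauss]; field_simp
    _ = ∑ k : Fin d, ((k + (c : Fin d) : Fin d) : ℚ) / d :=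
        (Equiv.sum_comp (Equiv.addRight (c : Fin d)) (fun k : Fin d => (k : ℚ) / d)).symm
    _ ≤ _ := Finset.sum_le_sum fun k _ => key k

lemma exists_add_half_of_isIntQ_two_mul {q : ℚ} (h2 : IsIntQ (2 * q)) (hq : ¬ IsIntQ q) :
    ∃ t : ℤ, q = t + 1 / 2 := by
  obtain ⟨u, hu⟩ := h2
  obtain ⟨t, rfl | rfl⟩ := Int.even_or_odd' u
  · exact absurd ⟨t, by push_cast at hu; linarith⟩ hq
  · exact ⟨t, by push_cast at hu; linarith⟩

lemma exists_reflection_of_sum_fract_lt_one {ι : Type*} [Fintype ι] {β : ι → ℚ}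
    (hhalf : ∀ i, IsIntQ (2 * β i)) {j : ι} (hj : ¬ IsIntQ (β j))
    (hlt : ∑ i, Int.fract (β i) < 1) :
    ∃ j : ι, (∃ t : ℤ, β j = t + 1 / 2) ∧ ∀ i, i ≠ j → IsIntQ (β i) := by
  classical
  have fract_eq_half {i : ι} (hi : ¬ IsIntQ (β i)) : Int.fract (β i) = 1 / 2 := by
    obtain ⟨t, ht⟩ := exists_add_half_of_isIntQ_two_mul (hhalf i) hi
    rw [ht, add_comm, Int.fract_add_intCast, Int.fract_eq_self.mpr ⟨by norm_num, by norm_num⟩]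
  refine ⟨j, exists_add_half_of_isIntQ_two_mul (hhalf j) hj, fun i hij => by_contra fun hi => ?_⟩
  have hpair := Finset.sum_le_sum_of_subset_of_nonneg (Finset.subset_univ {i, j})
    fun k _ _ => Int.fract_nonneg (β k)
  rw [Finset.sum_pair hij, fract_eq_half hi, fract_eq_half hj] at hpair
  linarith

lemma AddCircle.equivIco_one_zero_coe (q : ℚ) :
    (AddCircle.equivIco 1 0 (q : AddCircle (1 : ℚ)) : ℚ) = Int.fract q := by
  simp [AddCircle.coe_equivIco_mk_apply]

noncomputable def reidTaiSum (s : Multiset (AddCircle (1 : ℚ))) : ℚ :=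
  (s.map fun x => (AddCircle.equivIco 1 0 x : ℚ)).sum

lemma reidTaiSum_map_coe {ι : Type*} (s : Multiset ι) (β : ι → ℚ) :
    reidTaiSum (s.map fun i => (β i : AddCircle (1 : ℚ))) =
      (s.map fun i => Int.fract (β i)).sum := by
  simp only [reidTaiSum, Multiset.map_map, Function.comp_def, AddCircle.equivIco_one_zero_coe]

lemma reidTaiSum_mono {s t : Multiset (AddCircle (1 : ℚ))} (h : s ≤ t) :
    reidTaiSum s ≤ reidTaiSum t := by
  obtain ⟨u, rfl⟩ := Multiset.le_iff_exists_add.mp h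
  rw [reidTaiSum, reidTaiSum, Multiset.map_add, Multiset.sum_add, le_add_iff_nonneg_right]
  exact Multiset.sum_nonneg fun x hx => by
    obtain ⟨y, -, rfl⟩ := Multiset.mem_map.mp hx
    exact (AddCircle.equivIco 1 0 y).2.1

lemma reidTaiSum_VdExp (d : ℕ) :
    reidTaiSum (VdExp d) = ∑ k ∈ Finset.univ.filter fun k : Fin d => Nat.Coprime k d,
      Int.fract ((k : ℚ) / d) := by
  simp only [VdExp, Multiset.bind_def, Multiset.pure_def, Multiset.bind_singleton,
    Multiset.map_map, Function.comp_def]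
  exact reidTaiSum_map_coe _ _

lemma reidTaiSum_WdExp (d : ℕ) (μ : ℚ) :
    reidTaiSum (WdExp d μ) = ∑ k : Fin d, Int.fract ((k : ℚ) / d + μ) := by
  simp only [WdExp, Multiset.bind_def, Multiset.pure_def, Multiset.bind_singleton,
    Multiset.map_map, Function.comp_def]
  exact reidTaiSum_map_coe _ _

lemma one_le_reidTaiSum_VdExp {d : ℕ} (hd : 2 < d) : 1 ≤ reidTaiSum (VdExp d) :=
  reidTaiSum_VdExp d ▸ one_le_sum_fract_div_coprime hd

lemma one_le_reidTaiSum_WdExp {d : ℕ} (hd : 2 < d) (μ : ℚ) : 1 ≤ reidTaiSum (WdExp d μ) := by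
  have : NeZero d := ⟨by omega⟩
  have h3 : (3 : ℚ) ≤ d := by exact_mod_cast hd
  rw [reidTaiSum_WdExp]
  linarith [sub_one_div_two_le_sum_fract_div_add d μ]

lemma le_two_of_reidTaiSum_bind_lt_one {α : Type*} {s : Multiset α}
    {f : α → Multiset (AddCircle (1 : ℚ))} (d : α → ℕ)
    (hf : ∀ a, 2 < d a → 1 ≤ reidTaiSum (f a)) (hs : reidTaiSum (s.bind f) < 1) :
    ∀ a ∈ s, d a ≤ 2 := fun a ha => not_lt.mp fun hd =>
  ((hf a hd).trans (reidTaiSum_mono (Multiset.le_bind s ha))).not_gt hs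

lemma isIntQ_mul_of_mem_VdExp {d k : ℕ} {q : ℚ} (hdk : d ∣ k)
    (hq : (q : AddCircle (1 : ℚ)) ∈ VdExp d) : IsIntQ (k * q) := by
  simp only [VdExp, Multiset.bind_def, Multiset.pure_def, Multiset.bind_singleton,
    Multiset.map_map, Function.comp_def, Multiset.mem_map] at hq
  obtain ⟨j, -, hj⟩ := hq
  obtain ⟨e, rfl⟩ := hdk
  have hd : (d : ℚ) ≠ 0 := by have := j.pos; positivity
  rw [isIntQ_iff_coe_eq_zero, ← nsmul_eq_mul, AddCircle.coe_nsmul, ← hj, ← AddCircle.coe_nsmul,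
    nsmul_eq_mul, ← isIntQ_iff_coe_eq_zero]
  exact ⟨e * j, by push_cast; field_simp⟩

lemma dvd_gcd_two_of_le_two {d m : ℕ} (hd0 : 0 < d) (hd2 : d ≤ 2) (hdm : d ∣ m) :
    d ∣ Nat.gcd 2 m :=
  Nat.dvd_gcd (by interval_cases d <;> norm_num) hdm

/-- The representation is encoded by its exponents `β`: a generator acts by
`diag(e(β₁),…,e(βₙ))`, faithfully by `hord`. The indices in `S` carry `U = ⊕_{d ∈ ds} V_d`, the
others carry `⊕_{(d,μ) ∈ ws} W_{d,μ}`, and `hadm` tests admissibility at the subgroup of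
index `k`. -/
theorem stmt_13 (m n : ℕ) (hm : 1 < m)
    (β : Fin n → ℚ)
    (hβm : ∀ i, IsIntQ ((m : ℚ) * β i))
    (hord : ∀ k : ℕ, 0 < k → k < m → ∃ i, ¬ IsIntQ ((k : ℚ) * β i))
    (ds : Multiset ℕ) (ws : Multiset (ℕ × ℚ))
    (hds : ∀ d ∈ ds, 0 < d ∧ d ∣ m)
    (hws : ∀ p ∈ ws, 0 < p.1 ∧ p.1 ∣ m ∧ ∃ t : ℤ, p.2 = (t : ℚ) / m)
    (S : Finset (Fin n))
    (hU : S.val.map (fun i => ((β i : ℚ) : AddCircle (1 : ℚ))) = ds.bind VdExp)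
    (hW : Sᶜ.val.map (fun i => ((β i : ℚ) : AddCircle (1 : ℚ))) =
      ws.bind (fun p => WdExp p.1 p.2))
    (hadm : ∀ k : ℕ, k ∣ m → k < m →
      ((∃ i ∈ S, ¬ IsIntQ ((k : ℚ) * β i)) ∨ ∃ p ∈ ws, 1 < p.1 / Nat.gcd p.1 k))
    (hnotrefl : ¬ ∃ j : Fin n,
      (∃ t : ℤ, β j = (t : ℚ) + 1 / 2) ∧ ∀ i, i ≠ j → IsIntQ (β i)) :
    1 ≤ ∑ i, Int.fract (β i) := by
  by_contra! hlt
  have hsplit := Finset.sum_add_sum_compl S fun i => Int.fract (β i)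
  have hnonneg (T : Finset (Fin n)) : 0 ≤ ∑ i ∈ T, Int.fract (β i) :=
    Finset.sum_nonneg fun i _ => Int.fract_nonneg (β i)
  have hUlt : reidTaiSum (ds.bind VdExp) < 1 := by
    rw [← hU, reidTaiSum_map_coe]
    exact (by linarith [hnonneg Sᶜ] : ∑ i ∈ S, Int.fract (β i) < 1)
  have hWlt : reidTaiSum (ws.bind fun p => WdExp p.1 p.2) < 1 := by
    rw [← hW, reidTaiSum_map_coe]
    exact (by linarith [hnonneg S] : ∑ i ∈ Sᶜ, Int.fract (β i) < 1)
  have hds2 := le_two_of_reidTaiSum_bind_lt_one id (fun _ => one_le_reidTaiSum_VdExp) hUlt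
  have hws2 := le_two_of_reidTaiSum_bind_lt_one Prod.fst
    (fun p hp => one_le_reidTaiSum_WdExp hp p.2) hWlt
  obtain rfl | hm2 : m = 2 ∨ 2 < m := by omega
  · obtain ⟨j, hj⟩ := hord 1 one_pos hm
    exact hnotrefl (exists_reflection_of_sum_fract_lt_one (by simpa using hβm)
      (by simpa using hj) hlt)
  have hg : Nat.gcd 2 m < m := (Nat.le_of_dvd two_pos (Nat.gcd_dvd_left 2 m)).trans_lt hm2
  rcases hadm _ (Nat.gcd_dvd_right 2 m) hg with ⟨i, hi, hni⟩ | ⟨p, hp, hgt⟩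
  · obtain ⟨d, hd, hmem⟩ := Multiset.mem_bind.mp (hU ▸ Multiset.mem_map_of_mem _ hi)
    exact hni (isIntQ_mul_of_mem_VdExp
      (dvd_gcd_two_of_le_two (hds d hd).1 (hds2 d hd) (hds d hd).2) hmem)
  · rw [Nat.gcd_eq_left (dvd_gcd_two_of_le_two (hws p hp).1 (hws2 p hp) (hws p hp).2.1),
      Nat.div_self (hws p hp).1] at hgt
    exact hgt.false
end

section
/- Let L be an even lattice whose discriminant group satisfies: for each prime p, the p-component (A_L)_p contains a nondegenerate subgroup A_p' (with respect to the discriminant bilinear form) of the same exponent as (A_L)_p and of length ≤ 2, so that (A_L)_p = A_p' ⊕ (A_p')^⊥. If G_p is a maximal isotropic subgroup of (A_p')^⊥ (with respect to the discriminant quadratic form), then the finite quadratic form (G_p^⊥ ∩ (A_p')^⊥)/G_p is anisotropic. -/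
/-- `x ∈ ℚ` is twice an integer (i.e. `x = 0` in `ℚ/2ℤ`). -/
def IsEvenQ (x : ℚ) : Prop := ∃ t : ℤ, x = 2 * (t : ℚ)

/-!
If `x ∈ G^⊥` has `q x = 0`, then `ℤ x` is isotropic and orthogonal to `G`, so `G + ℤ x` is
isotropic; maximality of `G` forces `x ∈ G`.
-/

lemma IsIntQ.add {a c : ℚ} (ha : IsIntQ a) (hc : IsIntQ c) : IsIntQ (a + c) := by
  obtain ⟨t, rfl⟩ := ha; obtain ⟨s, rfl⟩ := hc; exact ⟨t + s, by push_cast; ring⟩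

lemma IsIntQ.sub {a c : ℚ} (ha : IsIntQ a) (hc : IsIntQ c) : IsIntQ (a - c) := by
  obtain ⟨t, rfl⟩ := ha; obtain ⟨s, rfl⟩ := hc; exact ⟨t - s, by push_cast; ring⟩

lemma IsIntQ.neg {a : ℚ} (ha : IsIntQ a) : IsIntQ (-a) := by
  obtain ⟨t, rfl⟩ := ha; exact ⟨-t, by push_cast; ring⟩

lemma IsIntQ.isEvenQ_two_mul {a : ℚ} (ha : IsIntQ a) : IsEvenQ (2 * a) := by
  obtain ⟨t, rfl⟩ := ha; exact ⟨t, rfl⟩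

lemma IsEvenQ.add {a c : ℚ} (ha : IsEvenQ a) (hc : IsEvenQ c) : IsEvenQ (a + c) := by
  obtain ⟨t, rfl⟩ := ha; obtain ⟨s, rfl⟩ := hc; exact ⟨t + s, by push_cast; ring⟩

lemma IsEvenQ.int_mul {a : ℚ} (ha : IsEvenQ a) (n : ℤ) : IsEvenQ (n * a) := by
  obtain ⟨t, rfl⟩ := ha; exact ⟨n * t, by push_cast; ring⟩

section

variable {A : Type*} [AddCommGroup A]

lemma isIntQ_map_zero {f : A → ℚ} (hf : ∀ x y, IsIntQ (f (x + y) - f x - f y)) :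
    IsIntQ (f 0) := by
  simpa [sub_sub, ← two_mul] using (hf 0 0).neg

def integralLocus (f : A → ℚ) (hf : ∀ x y, IsIntQ (f (x + y) - f x - f y)) : AddSubgroup A where
  carrier := {x | IsIntQ (f x)}
  zero_mem' := isIntQ_map_zero hf
  add_mem' {x y} hx hy := by
    show IsIntQ (f (x + y))
    convert ((hf x y).add hx).add hy using 1
    ring
  neg_mem' {x} hx := by
    simpa using ((isIntQ_map_zero hf).sub hx).sub (hf x (-x))

def IsIsotropic (q : A → ℚ) (H : AddSubgroup A) : Prop := ∀ h ∈ H, IsEvenQ (q h)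

lemma isIsotropic_zmultiples {q : A → ℚ}
    (hq : ∀ (n : ℤ) (a : A), IsEvenQ (q (n • a) - (n : ℚ)^2 * q a)) {x : A}
    (hx : IsEvenQ (q x)) : IsIsotropic q (AddSubgroup.zmultiples x) := by
  rintro _ ⟨n, rfl⟩
  convert (hq n x).add (hx.int_mul (n ^ 2)) using 1
  push_cast
  ring

lemma IsIsotropic.sup {q : A → ℚ} {b : A → A → ℚ}
    (hb : ∀ x y, b x y = (q (x + y) - q x - q y) / 2)
    {H K : AddSubgroup A} (hH : IsIsotropic q H) (hK : IsIsotropic q K)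
    (horth : ∀ h ∈ H, ∀ k ∈ K, IsIntQ (b h k)) : IsIsotropic q (H ⊔ K) := by
  intro a ha
  obtain ⟨h, hh, k, hk, rfl⟩ := AddSubgroup.mem_sup.mp ha
  have hqsum : q (h + k) = q h + q k + 2 * b h k := by rw [hb]; ring
  rw [hqsum]
  exact ((hH h hh).add (hK k hk)).add (horth h hh k hk).isEvenQ_two_mul

end

theorem stmt_14_general (A : Type*) [AddCommGroup A]
    (q : A → ℚ)
    (hq : ∀ (n : ℤ) (a : A), IsEvenQ (q (n • a) - (n : ℚ)^2 * q a))
    (b : A → A → ℚ)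
    (hb : ∀ x y, b x y = (q (x + y) - q x - q y) / 2)
    (hbil : ∀ x y z, IsIntQ (b (x + y) z - b x z - b y z))
    (G : AddSubgroup A)
    (hiso : ∀ g ∈ G, IsEvenQ (q g))
    (hmax : ∀ G' : AddSubgroup A, G ≤ G' → (∀ g ∈ G', IsEvenQ (q g)) → G' = G) :
    ∀ x : A, (∀ g ∈ G, IsIntQ (b x g)) → IsEvenQ (q x) → x ∈ G := by
  intro x hperp hqx
  have horth : ∀ y ∈ AddSubgroup.zmultiples x, ∀ g ∈ G, IsIntQ (b y g) := fun y hy g hg =>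
    (AddSubgroup.zmultiples_le.mpr (show x ∈ integralLocus (b · g) (hbil · · g) from
      hperp g hg)) hy
  have hsup : IsIsotropic q (AddSubgroup.zmultiples x ⊔ G) :=
    (isIsotropic_zmultiples hq hqx).sup hb hiso horth
  rw [← hmax _ le_sup_right hsup]
  exact AddSubgroup.mem_sup_left (AddSubgroup.mem_zmultiples x)

/-- Let `(A, q)` be a nondegenerate finite quadratic form
(`q : A → ℚ/2ℤ` is encoded by a `ℚ`-valued function taken modulo `2ℤ`, with associated
bilinear form `b(x,y) = (q(x+y) − q(x) − q(y))/2` taken modulo `ℤ`).  If `G ⊆ A` is a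
maximal isotropic subgroup, then the induced quadratic form on `G^⊥/G` is anisotropic:
any `x ∈ G^⊥` with `q(x) = 0` in `ℚ/2ℤ` lies in `G`. -/
theorem stmt_14 (A : Type*) [AddCommGroup A] [Fintype A]
    (q : A → ℚ)
    (hq : ∀ (n : ℤ) (a : A), IsEvenQ (q (n • a) - (n : ℚ)^2 * q a))
    (b : A → A → ℚ)
    (hb : ∀ x y, b x y = (q (x + y) - q x - q y) / 2)
    (hbil : ∀ x y z, IsIntQ (b (x + y) z - b x z - b y z))
    (hnd : ∀ x : A, x ≠ 0 → ∃ y, ¬ IsIntQ (b x y))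
    (G : AddSubgroup A)
    (hiso : ∀ g ∈ G, IsEvenQ (q g))
    (hmax : ∀ G' : AddSubgroup A, G ≤ G' → (∀ g ∈ G', IsEvenQ (q g)) → G' = G) :
    ∀ x : A, (∀ g ∈ G, IsIntQ (b x g)) → IsEvenQ (q x) → x ∈ G :=
  stmt_14_general A q hq b hb hbil G hiso hmax
end
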